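/- For the full 22-generator Basis I chain complex (V, ∂) one has ∂ ∘ ∂ = 0, the rank of ∂ equals 10, the kernel of ∂ has dimension 12, and the quotient ker ∂ / im ∂ has dimension 2 over the field with two elements; that is, the homology of (V, ∂) is isomorphic to ℤ₂ ⊕ ℤ₂. -/

import Mathlib

/-- The basis vectors `X, A, B, C₁, C₂, C₃, D₁₁, D₁₂, D₂₁, D₂₂, E₁₁, E₁₂, E₂₁, E₂₂,
F₁, F₂, G₁₁, G₁₂, G₂₁, G₂₂, G₃₁, G₃₂` (in this order) of the 22-dimensional vector
space `V = (Fin 22 → ZMod 2)` over the field with two elements. -/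
def e (i : Fin 22) : Fin 22 → ZMod 2 := Pi.single i 1

/-! Over `𝔽₂` everything is a finite computation with the matrix of `∂`, whose square is zero.
Its rank is `10`: the boundaries of ten explicit chains have pivot coordinates forming an
identity block, and every column of `∂` is a combination of them, so they are a basis of `im ∂`.
Rank–nullity then gives `dim ker ∂ = 12`, and the homology has dimension `12 - 10 = 2`. -/

open Module LinearMap Matrix

namespace LinearMap

theorem finrank_range_eq_of_leftInverse_of_factor {R U V W : Type*} [Semiring R]
    [AddCommMonoid U] [Module R U] [AddCommMonoid V] [Module R V] [AddCommMonoid W] [Module R W]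
    {f : V →ₗ[R] W} {s : U →ₗ[R] V} {r : W →ₗ[R] U}
    (hinv : r ∘ₗ f ∘ₗ s = id) (hfactor : (f ∘ₗ s) ∘ₗ (r ∘ₗ f) = f) :
    finrank R (range f) = finrank R U := by
  have hinj : Function.Injective (f ∘ₗ s) :=
    Function.LeftInverse.injective (g := r) fun x => congr($hinv x)
  have hrange : range (f ∘ₗ s) = range f :=
    le_antisymm (range_comp_le_range _ _) (by
      simpa only [hfactor] using range_comp_le_range (r ∘ₗ f) (f ∘ₗ s))
  rw [← hrange, finrank_range_of_inj hinj]

theorem finrank_homology_add_finrank_range {K V : Type*} [DivisionRing K] [AddCommGroup V]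
    [Module K V] [FiniteDimensional K V] {f : V →ₗ[K] V} (hf : f ∘ₗ f = 0) :
    finrank K (ker f ⧸ (range f).comap (ker f).subtype) + finrank K (range f) =
      finrank K (ker f) := by
  rw [← (Submodule.comapSubtypeEquivOfLe (range_le_ker_iff.mpr hf)).finrank_eq]
  exact Submodule.finrank_quotient_add_finrank _

end LinearMap

-- column `j` is `∂ (e j)`
def boundaryMatrix : Matrix (Fin 22) (Fin 22) (ZMod 2) :=
  (Matrix.of ![0, e 2, 0, 0, e 0 + e 3, e 2, e 2 + e 16 + e 7, e 17, e 9, 0, e 0 + e 11, 0,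
    e 13, 0, e 11 + e 3, e 13 + e 5 + e 1, e 17, 0, e 12 + e 16 + e 19, e 13 + e 17, e 8 + e 21,
    e 9])ᵀ

/- The columns of `boundaryMatrix * boundaryLifts` are `∂A, ∂C₂, ∂(A + D₁₁), ∂D₁₂, ∂D₂₁, ∂E₁₁,
∂E₂₁, ∂(E₂₁ + F₂), ∂G₂₁, ∂G₃₁`, and `pivotCoords` reads off one pivot coordinate of each. -/
def boundaryLifts : Matrix (Fin 22) (Fin 10) (ZMod 2) :=
  (Matrix.of ![e 1, e 4, e 1 + e 6, e 7, e 8, e 10, e 12, e 12 + e 15, e 18, e 20])ᵀ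

def pivotCoords : Matrix (Fin 10) (Fin 22) (ZMod 2) :=
  Matrix.of ![e 2, e 3, e 7, e 17, e 9, e 11, e 13, e 1, e 12, e 8]

theorem boundaryMatrix_mul_self : boundaryMatrix * boundaryMatrix = 0 := by
  decide +kernel

theorem pivotCoords_mul_boundaryMatrix_mul_boundaryLifts :
    pivotCoords * boundaryMatrix * boundaryLifts = 1 := by
  decide +kernel

theorem boundaryMatrix_mul_boundaryLifts_mul_pivotCoords_mul_boundaryMatrix :
    boundaryMatrix * boundaryLifts * (pivotCoords * boundaryMatrix) = boundaryMatrix := by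
  decide +kernel

/-- For the full 22-generator Basis I chain complex `(V, ∂)`: `∂ ∘ ∂ = 0`, the rank of
`∂` is `10`, its kernel is `12`-dimensional, and the homology `ker ∂ / im ∂` is
2-dimensional over `ZMod 2`, i.e. isomorphic to `ℤ₂ ⊕ ℤ₂`. -/
theorem stmt6 (D : (Fin 22 → ZMod 2) →ₗ[ZMod 2] (Fin 22 → ZMod 2))
    (hX : D (e 0) = 0)
    (hA : D (e 1) = e 2)
    (hB : D (e 2) = 0)
    (hC1 : D (e 3) = 0)
    (hC2 : D (e 4) = e 0 + e 3)
    (hC3 : D (e 5) = e 2)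
    (hD11 : D (e 6) = e 2 + e 16 + e 7)
    (hD12 : D (e 7) = e 17)
    (hD21 : D (e 8) = e 9)
    (hD22 : D (e 9) = 0)
    (hE11 : D (e 10) = e 0 + e 11)
    (hE12 : D (e 11) = 0)
    (hE21 : D (e 12) = e 13)
    (hE22 : D (e 13) = 0)
    (hF1 : D (e 14) = e 11 + e 3)
    (hF2 : D (e 15) = e 13 + e 5 + e 1)
    (hG11 : D (e 16) = e 17)
    (hG12 : D (e 17) = 0)
    (hG21 : D (e 18) = e 12 + e 16 + e 19)
    (hG22 : D (e 19) = e 13 + e 17)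
    (hG31 : D (e 20) = e 8 + e 21)
    (hG32 : D (e 21) = e 9) :
    D ∘ₗ D = 0 ∧
    Module.finrank (ZMod 2) ↥(LinearMap.range D) = 10 ∧
    Module.finrank (ZMod 2) ↥(LinearMap.ker D) = 12 ∧
    Module.finrank (ZMod 2)
      (↥(LinearMap.ker D) ⧸
        Submodule.comap (LinearMap.ker D).subtype (LinearMap.range D)) = 2 ∧
    Nonempty
      ((↥(LinearMap.ker D) ⧸
        Submodule.comap (LinearMap.ker D).subtype (LinearMap.range D)) ≃ₗ[ZMod 2]
        ZMod 2 × ZMod 2) := by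
  have hD : D = boundaryMatrix.mulVecLin := by
    refine (Pi.basisFun (ZMod 2) (Fin 22)).ext fun j => ?_
    rw [Pi.basisFun_apply, mulVecLin_apply, mulVec_single_one]
    fin_cases j <;> assumption
  have hDD : D ∘ₗ D = 0 := by
    rw [hD, ← mulVecLin_mul, boundaryMatrix_mul_self, mulVecLin_zero]
  have hrange : finrank (ZMod 2) (range D) = 10 := by
    rw [hD, finrank_range_eq_of_leftInverse_of_factor (s := boundaryLifts.mulVecLin)
      (r := pivotCoords.mulVecLin), finrank_fin_fun]
    · rw [← mulVecLin_mul, ← mulVecLin_mul, ← Matrix.mul_assoc,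
        pivotCoords_mul_boundaryMatrix_mul_boundaryLifts, mulVecLin_one]
    · rw [← mulVecLin_mul, ← mulVecLin_mul, ← mulVecLin_mul,
        boundaryMatrix_mul_boundaryLifts_mul_pivotCoords_mul_boundaryMatrix]
  have hker : finrank (ZMod 2) (ker D) = 12 := by
    have hrank_nullity := finrank_range_add_finrank_ker D
    rw [hrange, finrank_fin_fun] at hrank_nullity
    omega
  have hhomology : finrank (ZMod 2) (ker D ⧸ (range D).comap (ker D).subtype) = 2 := by
    have := finrank_homology_add_finrank_range hDD
    omega
  refine ⟨hDD, hrange, hker, hhomology,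
    FiniteDimensional.nonempty_linearEquiv_of_finrank_eq ?_⟩
  rw [hhomology, finrank_prod, finrank_self]
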